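/- Let k ≥ 3 and let G be a connected k-regular graph of order n and diameter 2 in which every pair of adjacent vertices has at least one common neighbor, with adjacency matrix A, and let D be the distance matrix of the bipartite double cover B(G). Then every real eigenvalue μ of D (i.e., every μ ∈ ℝ for which there exists a nonzero vector u ∈ ℝ^{V ⊕ V} with D·u = μ·u) satisfies: μ = -2k + 5n - 2, or μ = 2k - n - 2, or μ = 2λ - 2 or μ = -2λ - 2 for some real eigenvalue λ of A. -/

import Mathlib

open SimpleGraph

/-- The bipartite double cover of a graph `G`, on vertex set `V ⊕ V`. -/
def bipartiteDoubleCover {V : Type*} (G : SimpleGraph V) : SimpleGraph (V ⊕ V) where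
  Adj x y :=
    match x, y with
    | Sum.inl u, Sum.inr v => G.Adj u v
    | Sum.inr u, Sum.inl v => G.Adj u v
    | _, _ => False
  symm := by
    refine ⟨?_⟩
    rintro (u | u) (v | v) h
    · exact h.elim
    · exact h.symm
    · exact h.symm
    · exact h.elim
  loopless := by
    refine ⟨?_⟩
    rintro (u | u) h
    · exact h
    · exact h

/-- The distance matrix of a graph `H`, over the reals. -/
noncomputable def distMatrix {W : Type*} (H : SimpleGraph W) : Matrix W W ℝ :=
  Matrix.of fun x y => (H.dist x y : ℝ)

section Aux

variable {V : Type*} [Fintype V] [DecidableEq V] (G : SimpleGraph V) [DecidableRel G.Adj]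

lemma bdc_adj_inl_inr (u v : V) :
    (_root_.bipartiteDoubleCover G).Adj (Sum.inl u) (Sum.inr v) ↔ G.Adj u v := Iff.rfl

lemma bdc_adj_inr_inl (u v : V) :
    (_root_.bipartiteDoubleCover G).Adj (Sum.inr u) (Sum.inl v) ↔ G.Adj u v := Iff.rfl

lemma bdc_adj_inl_inl (u v : V) :
    ¬ (_root_.bipartiteDoubleCover G).Adj (Sum.inl u) (Sum.inl v) := fun h => h

lemma bdc_adj_inr_inr (u v : V) :
    ¬ (_root_.bipartiteDoubleCover G).Adj (Sum.inr u) (Sum.inr v) := fun h => h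

variable {G}
set_option linter.unusedSectionVars false

/-- Any two distinct vertices have a common neighbor. -/
lemma common_nbr (hconn : G.Connected) (hdiam : G.diam = 2)
    (hcn : ∀ u v : V, G.Adj u v → ∃ x : V, G.Adj u x ∧ G.Adj v x)
    {u v : V} (hne : u ≠ v) : ∃ x, G.Adj u x ∧ G.Adj x v := by
  have hne' : G.ediam ≠ ⊤ := G.ediam_ne_top_of_diam_ne_zero (by rw [hdiam]; norm_num)
  have hd2 : G.dist u v ≤ 2 := hdiam ▸ dist_le_diam hne'
  have hd1 : 0 < G.dist u v := hconn.pos_dist_of_ne hne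
  obtain ⟨p, hp⟩ := (hconn u v).exists_walk_length_eq_dist
  interval_cases h : G.dist u v
  · -- dist = 1 : adjacent
    have hadj : G.Adj u v := dist_eq_one_iff_adj.mp h
    obtain ⟨x, hx1, hx2⟩ := hcn u v hadj
    exact ⟨x, hx1, hx2.symm⟩
  · -- dist = 2 : midpoint of a shortest walk
    refine ⟨p.getVert 1, ?_, ?_⟩
    · have := p.adj_getVert_succ (i := 0) (by omega)
      simpa [SimpleGraph.Walk.getVert_zero] using this
    · have := p.adj_getVert_succ (i := 1) (by omega)
      have h2 : p.getVert 2 = v := by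
        have := p.getVert_length
        rw [hp] at this
        exact this
      rwa [h2] at this

/-- Any two vertices that are not adjacent are joined by a walk of length 3. -/
lemma path3 (hconn : G.Connected) (hdiam : G.diam = 2) {k : ℕ} (hk : 3 ≤ k)
    (hreg : G.IsRegularOfDegree k)
    (hcn : ∀ u v : V, G.Adj u v → ∃ x : V, G.Adj u x ∧ G.Adj v x)
    {u v : V} (hna : ¬ G.Adj u v) :
    ∃ x y, G.Adj u x ∧ G.Adj x y ∧ G.Adj y v := by
  rcases eq_or_ne u v with rfl | hne
  · have hdeg : 0 < G.degree u := by rw [hreg u]; omega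
    obtain ⟨x, hx⟩ := G.degree_pos_iff_exists_adj u |>.mp hdeg
    obtain ⟨y, hy1, hy2⟩ := hcn u x hx
    exact ⟨x, y, hx, hy2, hy1.symm⟩
  · obtain ⟨x, hx1, hx2⟩ := common_nbr hconn hdiam hcn hne
    obtain ⟨y, hy1, hy2⟩ := hcn x v hx2
    exact ⟨x, y, hx1, hy1, hy2.symm⟩

lemma bdc_dist_inl_inl (hconn : G.Connected) (hdiam : G.diam = 2)
    (hcn : ∀ u v : V, G.Adj u v → ∃ x : V, G.Adj u x ∧ G.Adj v x)
    (u v : V) :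
    (_root_.bipartiteDoubleCover G).dist (Sum.inl u) (Sum.inl v) = if u = v then 0 else 2 := by
  rcases eq_or_ne u v with rfl | hne
  · simp [SimpleGraph.dist_self]
  · rw [if_neg hne]
    obtain ⟨x, hx1, hx2⟩ := common_nbr hconn hdiam hcn hne
    let p : (_root_.bipartiteDoubleCover G).Walk (Sum.inl u) (Sum.inl v) :=
      SimpleGraph.Walk.cons ((bdc_adj_inl_inr G u x).mpr hx1)
        (SimpleGraph.Walk.cons ((bdc_adj_inr_inl G x v).mpr hx2) SimpleGraph.Walk.nil)
    have hle : (_root_.bipartiteDoubleCover G).dist (Sum.inl u) (Sum.inl v) ≤ 2 := by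
      have := SimpleGraph.dist_le p
      simpa [p] using this
    have hpos : 0 < (_root_.bipartiteDoubleCover G).dist (Sum.inl u) (Sum.inl v) :=
      SimpleGraph.Reachable.pos_dist_of_ne ⟨p⟩ (by simp [hne])
    have hne1 : (_root_.bipartiteDoubleCover G).dist (Sum.inl u) (Sum.inl v) ≠ 1 := by
      intro h
      exact bdc_adj_inl_inl G u v (SimpleGraph.dist_eq_one_iff_adj.mp h)
    omega

lemma bdc_dist_inr_inr (hconn : G.Connected) (hdiam : G.diam = 2)
    (hcn : ∀ u v : V, G.Adj u v → ∃ x : V, G.Adj u x ∧ G.Adj v x)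
    (u v : V) :
    (_root_.bipartiteDoubleCover G).dist (Sum.inr u) (Sum.inr v) = if u = v then 0 else 2 := by
  rcases eq_or_ne u v with rfl | hne
  · simp [SimpleGraph.dist_self]
  · rw [if_neg hne]
    obtain ⟨x, hx1, hx2⟩ := common_nbr hconn hdiam hcn hne
    let p : (_root_.bipartiteDoubleCover G).Walk (Sum.inr u) (Sum.inr v) :=
      SimpleGraph.Walk.cons ((bdc_adj_inr_inl G u x).mpr hx1)
        (SimpleGraph.Walk.cons ((bdc_adj_inl_inr G x v).mpr hx2) SimpleGraph.Walk.nil)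
    have hle : (_root_.bipartiteDoubleCover G).dist (Sum.inr u) (Sum.inr v) ≤ 2 := by
      have := SimpleGraph.dist_le p
      simpa [p] using this
    have hpos : 0 < (_root_.bipartiteDoubleCover G).dist (Sum.inr u) (Sum.inr v) :=
      SimpleGraph.Reachable.pos_dist_of_ne ⟨p⟩ (by simp [hne])
    have hne1 : (_root_.bipartiteDoubleCover G).dist (Sum.inr u) (Sum.inr v) ≠ 1 := by
      intro h
      exact bdc_adj_inr_inr G u v (SimpleGraph.dist_eq_one_iff_adj.mp h)
    omega

lemma bdc_dist_inl_inr (hconn : G.Connected) (hdiam : G.diam = 2) {k : ℕ} (hk : 3 ≤ k)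
    (hreg : G.IsRegularOfDegree k)
    (hcn : ∀ u v : V, G.Adj u v → ∃ x : V, G.Adj u x ∧ G.Adj v x)
    (u v : V) :
    (_root_.bipartiteDoubleCover G).dist (Sum.inl u) (Sum.inr v) = if G.Adj u v then 1 else 3 := by
  by_cases hadj : G.Adj u v
  · rw [if_pos hadj]
    exact SimpleGraph.dist_eq_one_iff_adj.mpr ((bdc_adj_inl_inr G u v).mpr hadj)
  · rw [if_neg hadj]
    obtain ⟨x, y, h1, h2, h3⟩ := path3 hconn hdiam hk hreg hcn hadj
    let p : (_root_.bipartiteDoubleCover G).Walk (Sum.inl u) (Sum.inr v) :=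
      SimpleGraph.Walk.cons ((bdc_adj_inl_inr G u x).mpr h1)
        (SimpleGraph.Walk.cons ((bdc_adj_inr_inl G x y).mpr h2)
          (SimpleGraph.Walk.cons ((bdc_adj_inl_inr G y v).mpr h3) SimpleGraph.Walk.nil))
    have hle : (_root_.bipartiteDoubleCover G).dist (Sum.inl u) (Sum.inr v) ≤ 3 := by
      have := SimpleGraph.dist_le p
      simpa [p] using this
    have hpos : 0 < (_root_.bipartiteDoubleCover G).dist (Sum.inl u) (Sum.inr v) :=
      SimpleGraph.Reachable.pos_dist_of_ne ⟨p⟩ (by simp)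
    have hne1 : (_root_.bipartiteDoubleCover G).dist (Sum.inl u) (Sum.inr v) ≠ 1 := by
      intro h
      exact hadj ((bdc_adj_inl_inr G u v).mp (SimpleGraph.dist_eq_one_iff_adj.mp h))
    have hne2 : (_root_.bipartiteDoubleCover G).dist (Sum.inl u) (Sum.inr v) ≠ 2 := by
      intro h
      obtain ⟨q, hq⟩ := SimpleGraph.exists_walk_of_dist_ne_zero
        (G := _root_.bipartiteDoubleCover G) (u := Sum.inl u) (v := Sum.inr v) (by omega)
      rw [h] at hq
      have ha1 := q.adj_getVert_succ (i := 0) (by omega)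
      have ha2 := q.adj_getVert_succ (i := 1) (by omega)
      rw [q.getVert_zero] at ha1
      have h2 : q.getVert 2 = Sum.inr v := by
        have := q.getVert_length
        rw [hq] at this
        exact this
      rw [h2] at ha2
      rcases hw : q.getVert 1 with a | a
      · rw [hw] at ha1; exact bdc_adj_inl_inl G u a ha1
      · rw [hw] at ha2; exact bdc_adj_inr_inr G a v ha2
    omega

lemma bdc_dist_inr_inl (hconn : G.Connected) (hdiam : G.diam = 2) {k : ℕ} (hk : 3 ≤ k)
    (hreg : G.IsRegularOfDegree k)
    (hcn : ∀ u v : V, G.Adj u v → ∃ x : V, G.Adj u x ∧ G.Adj v x)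
    (u v : V) :
    (_root_.bipartiteDoubleCover G).dist (Sum.inr u) (Sum.inl v) = if G.Adj u v then 1 else 3 := by
  rw [SimpleGraph.dist_comm, bdc_dist_inl_inr hconn hdiam hk hreg hcn]
  simp [G.adj_comm]

end Aux

theorem stmt12 {V : Type*} [Fintype V] (G : SimpleGraph V)
    [DecidableRel G.Adj] (k : ℕ) (hk : 3 ≤ k)
    (hconn : G.Connected) (hreg : G.IsRegularOfDegree k) (hdiam : G.diam = 2)
    (hcn : ∀ u v : V, G.Adj u v → ∃ x : V, G.Adj u x ∧ G.Adj v x)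
    (μ : ℝ) (hμ : ∃ u : V ⊕ V → ℝ, u ≠ 0 ∧
      (distMatrix (_root_.bipartiteDoubleCover G)).mulVec u = μ • u) :
    μ = -2 * (k : ℝ) + 5 * (Fintype.card V : ℝ) - 2 ∨
    μ = 2 * (k : ℝ) - (Fintype.card V : ℝ) - 2 ∨
    ∃ lam : ℝ, (∃ w : V → ℝ, w ≠ 0 ∧ (G.adjMatrix ℝ).mulVec w = lam • w) ∧
      (μ = 2 * lam - 2 ∨ μ = -2 * lam - 2) := by
  classical
  obtain ⟨u, hu0, hEig⟩ := hμ
  set n : ℝ := (Fintype.card V : ℝ) with hn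
  set A : Matrix V V ℝ := G.adjMatrix ℝ with hA
  set D : Matrix (V ⊕ V) (V ⊕ V) ℝ := distMatrix (_root_.bipartiteDoubleCover G) with hD
  -- entries of the distance matrix
  have key_ll : ∀ v w : V, D (Sum.inl v) (Sum.inl w)
      = 2 - 2 * (if v = w then (1:ℝ) else 0) := by
    intro v w
    show ((_root_.bipartiteDoubleCover G).dist (Sum.inl v) (Sum.inl w) : ℝ) = _
    rw [bdc_dist_inl_inl hconn hdiam hcn]
    split_ifs <;> norm_num
  have key_rr : ∀ v w : V, D (Sum.inr v) (Sum.inr w)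
      = 2 - 2 * (if v = w then (1:ℝ) else 0) := by
    intro v w
    show ((_root_.bipartiteDoubleCover G).dist (Sum.inr v) (Sum.inr w) : ℝ) = _
    rw [bdc_dist_inr_inr hconn hdiam hcn]
    split_ifs <;> norm_num
  have key_lr : ∀ v w : V, D (Sum.inl v) (Sum.inr w) = 3 - 2 * A v w := by
    intro v w
    show ((_root_.bipartiteDoubleCover G).dist (Sum.inl v) (Sum.inr w) : ℝ) = _
    rw [bdc_dist_inl_inr hconn hdiam hk hreg hcn, hA, SimpleGraph.adjMatrix_apply]
    split_ifs <;> norm_num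
  have key_rl : ∀ v w : V, D (Sum.inr v) (Sum.inl w) = 3 - 2 * A v w := by
    intro v w
    show ((_root_.bipartiteDoubleCover G).dist (Sum.inr v) (Sum.inl w) : ℝ) = _
    rw [bdc_dist_inr_inl hconn hdiam hk hreg hcn, hA, SimpleGraph.adjMatrix_apply]
    split_ifs <;> norm_num
  set u1 : V → ℝ := fun v => u (Sum.inl v) with hu1
  set u2 : V → ℝ := fun v => u (Sum.inr v) with hu2
  set S1 : ℝ := ∑ v, u1 v with hS1
  set S2 : ℝ := ∑ v, u2 v with hS2
  have sum_ll : ∀ (v : V) (f : V → ℝ),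
      ∑ w, (2 - 2 * (if v = w then (1:ℝ) else 0)) * f w = 2 * (∑ w, f w) - 2 * f v := by
    intro v f
    have h1 : ∀ w, (2 - 2 * (if v = w then (1:ℝ) else 0)) * f w
        = 2 * f w - 2 * (if v = w then f w else 0) := by
      intro w; split_ifs <;> ring
    simp_rw [h1]
    rw [Finset.sum_sub_distrib, ← Finset.mul_sum, ← Finset.mul_sum, Finset.sum_ite_eq]
    simp
  have sum_lr : ∀ (v : V) (f : V → ℝ),
      ∑ w, (3 - 2 * A v w) * f w = 3 * (∑ w, f w) - 2 * (A.mulVec f v) := by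
    intro v f
    have h1 : ∀ w, (3 - 2 * A v w) * f w = 3 * f w - 2 * (A v w * f w) := by
      intro w; ring
    simp_rw [h1]
    rw [Finset.sum_sub_distrib, ← Finset.mul_sum, ← Finset.mul_sum]
    rfl
  have E1 : ∀ v, 2 * S1 - 2 * u1 v + (3 * S2 - 2 * A.mulVec u2 v) = μ * u1 v := by
    intro v
    have h := congrFun hEig (Sum.inl v)
    rw [Matrix.mulVec, dotProduct, Fintype.sum_sum_type] at h
    simp_rw [key_ll, key_lr] at h
    rw [sum_ll v u1, sum_lr v u2] at h
    simpa using h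
  have E2 : ∀ v, 3 * S1 - 2 * A.mulVec u1 v + (2 * S2 - 2 * u2 v) = μ * u2 v := by
    intro v
    have h := congrFun hEig (Sum.inr v)
    rw [Matrix.mulVec, dotProduct, Fintype.sum_sum_type] at h
    simp_rw [key_rl, key_rr] at h
    rw [sum_lr v u1, sum_ll v u2] at h
    simpa using h
  -- column sums of the adjacency matrix
  have colsum : ∀ f : V → ℝ, ∑ v, A.mulVec f v = k * ∑ v, f v := by
    intro f
    have h0 : ∀ v, A.mulVec f v = ∑ w, (if G.Adj v w then f w else 0) := by
      intro v
      rw [hA, SimpleGraph.adjMatrix_mulVec_apply, SimpleGraph.neighborFinset_eq_filter,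
        Finset.sum_filter]
    simp_rw [h0]
    rw [Finset.sum_comm]
    have h1 : ∀ w, ∑ v, (if G.Adj v w then f w else 0) = (k : ℝ) * f w := by
      intro w
      rw [← Finset.sum_filter, Finset.sum_const, nsmul_eq_mul]
      congr 1
      have h2 : Finset.filter (fun v => G.Adj v w) Finset.univ = G.neighborFinset w := by
        ext x; simp [SimpleGraph.adj_comm]
      rw [h2]
      have := hreg w
      rw [SimpleGraph.degree] at this
      exact_mod_cast this
    simp_rw [h1]
    rw [← Finset.mul_sum]
  set P : V → ℝ := fun v => u1 v + u2 v with hP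
  set M : V → ℝ := fun v => u1 v - u2 v with hM
  have hAP : ∀ v, A.mulVec P v = A.mulVec u1 v + A.mulVec u2 v := by
    intro v
    have : P = u1 + u2 := rfl
    rw [this, Matrix.mulVec_add]; rfl
  have hAM : ∀ v, A.mulVec M v = A.mulVec u1 v - A.mulVec u2 v := by
    intro v
    have : M = u1 - u2 := rfl
    rw [this, Matrix.mulVec_sub]; rfl
  have EP : ∀ v, 5 * (S1 + S2) - 2 * P v - 2 * A.mulVec P v = μ * P v := by
    intro v
    have h1 := E1 v
    have h2 := E2 v
    have h3 := hAP v
    have hPv : P v = u1 v + u2 v := rfl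
    rw [hPv, h3]
    linarith
  have EM : ∀ v, (S2 - S1) - 2 * M v + 2 * A.mulVec M v = μ * M v := by
    intro v
    have h1 := E1 v
    have h2 := E2 v
    have h3 := hAM v
    have hMv : M v = u1 v - u2 v := rfl
    rw [hMv, h3]
    linarith
  by_cases hPz : P = 0
  · -- use the difference part
    have hMz : M ≠ 0 := by
      intro h
      apply hu0
      funext x
      have hp := congrFun hPz
      have hm := congrFun h
      cases x with
      | inl v =>
        have h1 := hp v; have h2 := hm v
        rw [show P v = u1 v + u2 v from rfl, Pi.zero_apply] at h1
        rw [show M v = u1 v - u2 v from rfl, Pi.zero_apply] at h2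
        show u (Sum.inl v) = 0
        have : u1 v = 0 := by linarith
        exact this
      | inr v =>
        have h1 := hp v; have h2 := hm v
        rw [show P v = u1 v + u2 v from rfl, Pi.zero_apply] at h1
        rw [show M v = u1 v - u2 v from rfl, Pi.zero_apply] at h2
        show u (Sum.inr v) = 0
        have : u2 v = 0 := by linarith
        exact this
    by_cases hT : S1 - S2 = 0
    · -- eigenvector of A with eigenvalue (μ+2)/2
      refine Or.inr (Or.inr ⟨(μ + 2) / 2, ⟨M, hMz, ?_⟩, Or.inl (by ring)⟩)
      funext v
      have h := EM v
      have hT' : S2 - S1 = 0 := by linarith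
      rw [hT'] at h
      show A.mulVec M v = ((μ + 2) / 2) * M v
      linear_combination h / 2
    · -- μ = 2k - n - 2
      right; left
      have hsum : ∑ v, ((S2 - S1) - 2 * M v + 2 * A.mulVec M v) = ∑ v, μ * M v :=
        Finset.sum_congr rfl fun v _ => EM v
      rw [Finset.sum_add_distrib, Finset.sum_sub_distrib, Finset.sum_const,
        ← Finset.mul_sum, ← Finset.mul_sum, ← Finset.mul_sum, colsum, nsmul_eq_mul,
        Finset.card_univ] at hsum
      have hTM : ∑ v, M v = S1 - S2 := by
        simp only [hM]
        rw [Finset.sum_sub_distrib]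
      rw [hTM] at hsum
      have key : (2 * (k:ℝ) - n - 2) * (S1 - S2) = μ * (S1 - S2) := by
        rw [hn]; linear_combination hsum
      have := mul_right_cancel₀ hT key
      linarith [this]
  · -- use the sum part
    by_cases hS : S1 + S2 = 0
    · -- eigenvector of A with eigenvalue -(μ+2)/2
      refine Or.inr (Or.inr ⟨-(μ + 2) / 2, ⟨P, hPz, ?_⟩, Or.inr (by ring)⟩)
      funext v
      have h := EP v
      rw [hS] at h
      show A.mulVec P v = (-(μ + 2) / 2) * P v
      linear_combination -h / 2
    · -- μ = 5n - 2k - 2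
      left
      have hsum : ∑ v, (5 * (S1 + S2) - 2 * P v - 2 * A.mulVec P v) = ∑ v, μ * P v :=
        Finset.sum_congr rfl fun v _ => EP v
      rw [Finset.sum_sub_distrib, Finset.sum_sub_distrib, Finset.sum_const,
        ← Finset.mul_sum, ← Finset.mul_sum, ← Finset.mul_sum, colsum, nsmul_eq_mul,
        Finset.card_univ] at hsum
      have hSP : ∑ v, P v = S1 + S2 := by
        simp only [hP]
        rw [Finset.sum_add_distrib]
      rw [hSP] at hsum
      have key : (-2 * (k:ℝ) + 5 * n - 2) * (S1 + S2) = μ * (S1 + S2) := by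
        rw [hn]; linear_combination hsum
      have := mul_right_cancel₀ hS key
      linarith [this]
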